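/- Let K* = max{ D(P2||P1)/D*, D(P1||P2)/D* }. For every γ ≤ D* and every K ≥ K*, the two-phase hypothesis test run with Phase-II threshold α = 0 (i.e., λ = λ*) achieves every error-exponent pair on the boundary of the region R_γ; in particular R_γ ⊆ R_AFL^(γ,K) for all K ≥ K*. -/

import Mathlib

open Real Finset
open scoped Classical

noncomputable section

variable {X : Type} [Fintype X]

/-- `p` is a probability mass function on the finite alphabet `X`. -/
def IsPMF (p : X → ℝ) : Prop := (∀ x, 0 ≤ p x) ∧ ∑ x, p x = 1

/-- Kullback–Leibler divergence (natural logarithms) between distributions on a finite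
alphabet, with the convention `0 · log(0/·) = 0`. -/
def klDiv (p q : X → ℝ) : ℝ := ∑ x, p x * Real.log (p x / q x)

/-- The `λ`-tilted distribution between `P1` and `P2`. -/
def tilted (P1 P2 : X → ℝ) (lam : ℝ) (x : X) : ℝ :=
  P1 x ^ (1 - lam) * P2 x ^ lam / ∑ a, P1 a ^ (1 - lam) * P2 a ^ lam

/-- The fixed-length error-exponent region
`R_FL = {(E1,E2) : ∃ λ ∈ [0,1], E1 ≤ D(P^(λ)‖P1) ∧ E2 ≤ D(P^(λ)‖P2)}`. -/
def RFL (P1 P2 : X → ℝ) : Set (ℝ × ℝ) :=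
  { E | ∃ lam ∈ Set.Icc (0:ℝ) 1,
      E.1 ≤ klDiv (tilted P1 P2 lam) P1 ∧ E.2 ≤ klDiv (tilted P1 P2 lam) P2 }

/-- `E1(γ) = max { D(P^(λ)‖P1) : λ ∈ [0,1], D(P^(λ)‖P2) ≥ γ }`. -/
def E1exp (P1 P2 : X → ℝ) (γ : ℝ) : ℝ :=
  sSup { e | ∃ lam ∈ Set.Icc (0:ℝ) 1,
      γ ≤ klDiv (tilted P1 P2 lam) P2 ∧ e = klDiv (tilted P1 P2 lam) P1 }

/-- `E2(γ) = max { D(P^(λ)‖P2) : λ ∈ [0,1], D(P^(λ)‖P1) ≥ γ }`. -/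
def E2exp (P1 P2 : X → ℝ) (γ : ℝ) : ℝ :=
  sSup { e | ∃ lam ∈ Set.Icc (0:ℝ) 1,
      γ ≤ klDiv (tilted P1 P2 lam) P1 ∧ e = klDiv (tilted P1 P2 lam) P2 }

/-- `R_γ = R_FL ∪ ([0,E1(γ)] × [0,E2(γ)])`. -/
def Rgamma (P1 P2 : X → ℝ) (γ : ℝ) : Set (ℝ × ℝ) :=
  RFL P1 P2 ∪ (Set.Icc 0 (E1exp P1 P2 γ) ×ˢ Set.Icc 0 (E2exp P1 P2 γ))

/-- `K·S = {K·x : x ∈ S}` for `S ⊆ ℝ²`. -/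
def scaleSet (K : ℕ) (S : Set (ℝ × ℝ)) : Set (ℝ × ℝ) :=
  (fun p : ℝ × ℝ => ((K : ℝ) * p.1, (K : ℝ) * p.2)) '' S

/-- Probability of the i.i.d. sample sequence `x` under the distribution `P`. -/
def prodProb (P : X → ℝ) {N : ℕ} (x : Fin N → X) : ℝ := ∏ i, P (x i)

/-- The first `n` samples, as a list. -/
def histX {N : ℕ} (x : Fin N → X) (n : ℕ) : List X := (List.ofFn x).take n

/-- A sequential binary hypothesis test whose stopping time is almost surely bounded
by `N`: a stopping time `τ` with respect to the filtration `σ(X_1,…,X_n)` together with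
a decision (`accept1 = true` means "choose `H1`") taken at the stopping time; the
decision regions are `A1^τ = {accept1}` and `A2^τ = {¬ accept1}`. -/
structure SeqTest (X : Type) [Fintype X] (N : ℕ) where
  τ : (Fin N → X) → ℕ
  τ_le : ∀ x, τ x ≤ N
  τ_stopping : ∀ x x', histX x' (τ x) = histX x (τ x) → τ x' = τ x
  accept1 : List X → Bool

/-- Type-I error probability `P1(A2^τ)`. -/
def errProb1 (P1 : X → ℝ) {N : ℕ} (T : SeqTest X N) : ℝ :=
  ∑ x : Fin N → X, prodProb P1 x *
    (if T.accept1 (histX x (T.τ x)) = false then 1 else 0)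

/-- Type-II error probability `P2(A1^τ)`. -/
def errProb2 (P2 : X → ℝ) {N : ℕ} (T : SeqTest X N) : ℝ :=
  ∑ x : Fin N → X, prodProb P2 x *
    (if T.accept1 (histX x (T.τ x)) = true then 1 else 0)

/-- Probability `P(τ > n)` under sampling distribution `P`. -/
def lateProbHT (P : X → ℝ) {N : ℕ} (T : SeqTest X N) (n : ℕ) : ℝ :=
  ∑ x : Fin N → X, prodProb P x * (if n < T.τ x then 1 else 0)

/-- `(E1,E2)` is achievable in a `(γ,K)`-almost-fixed-length manner: for every `δ > 0`
and all large `n` there is a test with `P_i(τ > n) ≤ e^{−γn}`, `τ ≤ Kn` a.s. (encoded in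
the type of the test), `P1(A2^τ) ≤ e^{−(E1−δ)n}` and `P2(A1^τ) ≤ e^{−(E2−δ)n}`. -/
def AFLAchievable (P1 P2 : X → ℝ) (γ : ℝ) (K : ℕ) (E : ℝ × ℝ) : Prop :=
  ∀ δ > 0, ∃ N0 : ℕ, ∀ n : ℕ, n ≥ N0 → ∃ T : SeqTest X (K * n),
    lateProbHT P1 T n ≤ Real.exp (-(γ * n)) ∧
    lateProbHT P2 T n ≤ Real.exp (-(γ * n)) ∧
    errProb1 P1 T ≤ Real.exp (-((E.1 - δ) * n)) ∧
    errProb2 P2 T ≤ Real.exp (-((E.2 - δ) * n))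

/-- `R_AFL^(γ,K)`: the region of error-exponent pairs achievable in a
`(γ,K)`-almost-fixed-length manner. -/
def RAFL (P1 P2 : X → ℝ) (γ : ℝ) (K : ℕ) : Set (ℝ × ℝ) :=
  { E | AFLAchievable P1 P2 γ K E }

/-- Log-likelihood ratio `Σ_j log(P1(x_j)/P2(x_j))` of an observed sample list. -/
def llr (P1 P2 : X → ℝ) (l : List X) : ℝ :=
  (l.map fun a => Real.log (P1 a / P2 a)).sum

/-- The two-phase hypothesis test with Phase-I thresholds `α1, β1` and Phase-II
threshold `α`: Phase I collects `n` samples and stops, declaring `H1` if the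
log-likelihood ratio is `≥ α1·n` and `H2` if it is `≤ β1·n`; otherwise Phase II
collects `(K−1)n` additional samples and declares `H1` iff the overall log-likelihood
ratio is `≥ α·(Kn)`. -/
def twoPhaseTest (P1 P2 : X → ℝ) (α1 β1 α : ℝ) (K n : ℕ) (hK : 1 ≤ K) :
    SeqTest X (K * n) where
  τ := fun x =>
    if α1 * n ≤ llr P1 P2 (histX x n) ∨ llr P1 P2 (histX x n) ≤ β1 * n
    then n else K * n
  τ_le := by
    intro x
    try dsimp only
    split
    · exact Nat.le_mul_of_pos_left n (by omega)
    · exact le_rfl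
  τ_stopping := by
    intro x x' h
    try dsimp only at h ⊢
    by_cases hc : α1 * n ≤ llr P1 P2 (histX x n) ∨ llr P1 P2 (histX x n) ≤ β1 * n
    · rw [if_pos hc] at h ⊢
      rw [h, if_pos hc]
    · rw [if_neg hc] at h ⊢
      have hx : x' = x := by
        have h1 : List.ofFn x' = List.ofFn x := by
          simpa [histX, List.take_of_length_le, List.length_ofFn] using h
        exact List.ofFn_injective h1
      rw [hx, if_neg hc]
  accept1 := fun l =>
    if l.length ≤ n then decide (α1 * n ≤ llr P1 P2 l)
    else decide (α * (K * n : ℕ) ≤ llr P1 P2 l)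

/-!
Write `ℓ = log (P1 / P2)`, `Z(λ) = ∑ P1^(1-λ) P2^λ` and `b(λ) = E_{P^(λ)} ℓ`, which equals
`D(P^(λ)‖P2) - D(P^(λ)‖P1)`; thus `α1 = b(λ2)`, `β1 = b(λ1)` and `α = 0 = b(λ*)`. Chernoff's bound
with tilting parameter `λ` gives `P1(ℓ_m ≤ m b(λ)) ≤ exp(-m D(P^(λ)‖P1))` and
`P2(ℓ_m ≥ m b(λ)) ≤ exp(-m D(P^(λ)‖P2))` for the log-likelihood ratio `ℓ_m` of the first `m`
samples. A type-I error needs `ℓ_n ≤ n β1` or `ℓ_{Kn} < 0`, so its probability is at most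
`exp(-n E1(γ)) + exp(-Kn D*)`, and `K D* ≥ D(P2‖P1) ≥ E1(γ)`; type II is symmetric, and entering
Phase II forces `n β1 < ℓ_n < n α1`, which costs exponent at least `γ` under either hypothesis.

The hypothesis on `K` forces `K ≥ 2`, without which Phase II would never be reached. For the
liminf, the error probabilities are also bounded below by `P_i(a)^n`, `a` a symbol of extreme
likelihood ratio, since `log 0 = 0` and an unbounded sequence would make `liminf` meaningless.
-/

lemma nonempty_of_sum_eq_one {p : X → ℝ} (hp : ∑ a, p a = 1) : Nonempty X := by
  obtain ⟨a, -, -⟩ := exists_ne_zero_of_sum_ne_zero (hp ▸ one_ne_zero : ∑ a, p a ≠ 0)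
  exact ⟨a⟩

lemma sub_lt_mul_log_div {p q : ℝ} (hp : 0 < p) (hq : 0 < q) (hpq : p ≠ q) :
    p - q < p * log (p / q) := by
  have hlog := log_lt_sub_one_of_pos (div_pos hq hp)
    (by rwa [ne_eq, div_eq_one_iff_eq hp.ne', eq_comm])
  rw [← inv_div, log_inv]
  have : p * (q / p) = q := by field_simp
  nlinarith

lemma sub_le_mul_log_div {p q : ℝ} (hp : 0 < p) (hq : 0 < q) : p - q ≤ p * log (p / q) := by
  rcases eq_or_ne p q with rfl | hpq
  · simp [div_self hp.ne']
  · exact (sub_lt_mul_log_div hp hq hpq).le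

lemma klDiv_nonneg {p q : X → ℝ} (hp : ∀ a, 0 < p a) (hq : ∀ a, 0 < q a)
    (hpq : ∑ a, p a = ∑ a, q a) : 0 ≤ klDiv p q :=
  calc 0 = ∑ a, (p a - q a) := by rw [sum_sub_distrib, hpq, sub_self]
    _ ≤ klDiv p q := sum_le_sum fun a _ => sub_le_mul_log_div (hp a) (hq a)

lemma klDiv_pos {p q : X → ℝ} (hp : ∀ a, 0 < p a) (hq : ∀ a, 0 < q a)
    (hpq1 : ∑ a, p a = ∑ a, q a) (hpq : p ≠ q) : 0 < klDiv p q := by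
  obtain ⟨a, ha⟩ := Function.ne_iff.mp hpq
  calc 0 = ∑ a, (p a - q a) := by rw [sum_sub_distrib, hpq1, sub_self]
    _ < klDiv p q := sum_lt_sum (fun a _ => sub_le_mul_log_div (hp a) (hq a))
        ⟨a, mem_univ a, sub_lt_mul_log_div (hp a) (hq a) ha⟩

lemma eq_of_klDiv_eq_zero {p q : X → ℝ} (hp : ∀ a, 0 < p a) (hq : ∀ a, 0 < q a)
    (hpq1 : ∑ a, p a = ∑ a, q a) (h : klDiv p q = 0) : p = q := by
  by_contra hpq
  exact (klDiv_pos hp hq hpq1 hpq).ne' h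

lemma klDiv_self (p : X → ℝ) : klDiv p p = 0 :=
  sum_eq_zero fun a _ => by rcases eq_or_ne (p a) 0 with h | h <;> simp [h]

lemma klDiv_eq_klDiv_add_of_eq_mul_exp {R p Q g : X → ℝ} {Z : ℝ} (hR : ∀ a, 0 < R a)
    (hR1 : ∑ a, R a = 1) (hp : ∀ a, 0 < p a) (hZ : 0 < Z) (hQ : ∀ a, Q a = p a * exp (g a) / Z) :
    klDiv R p = klDiv R Q + ∑ a, R a * g a - log Z := by
  have hterm : ∀ a, R a * log (R a / p a) = R a * log (R a / Q a) + R a * g a - R a * log Z := by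
    intro a
    have hQa : 0 < Q a := by rw [hQ]; have := hp a; positivity
    have : R a / p a = R a / Q a * (exp (g a) / Z) := by
      rw [hQ]; field_simp
    rw [this, log_mul (div_pos (hR a) hQa).ne' (by positivity), log_div (exp_ne_zero _) hZ.ne',
      log_exp]
    ring
  simp only [klDiv, hterm, sum_sub_distrib, sum_add_distrib, ← sum_mul, hR1, one_mul]

def logRatio (P1 P2 : X → ℝ) (a : X) : ℝ := log (P1 a / P2 a)

def tiltNorm (P1 P2 : X → ℝ) (lam : ℝ) : ℝ := ∑ a, P1 a ^ (1 - lam) * P2 a ^ lam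

def tiltedMean (P1 P2 : X → ℝ) (lam : ℝ) : ℝ := ∑ a, tilted P1 P2 lam a * logRatio P1 P2 a

lemma tilted_zero {P1 : X → ℝ} (h1 : ∑ a, P1 a = 1) (P2 : X → ℝ) : tilted P1 P2 0 = P1 := by
  ext a; simp [tilted, h1]

lemma tilted_one (P1 : X → ℝ) {P2 : X → ℝ} (h2 : ∑ a, P2 a = 1) : tilted P1 P2 1 = P2 := by
  ext a; simp [tilted, h2]

lemma sum_mul_logRatio_left (P1 P2 : X → ℝ) : ∑ a, P1 a * logRatio P1 P2 a = klDiv P1 P2 := rfl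

lemma sum_mul_logRatio_right (P1 P2 : X → ℝ) :
    ∑ a, P2 a * logRatio P1 P2 a = -klDiv P2 P1 := by
  simp only [klDiv, logRatio, ← sum_neg_distrib, ← mul_neg, ← log_inv, inv_div]

lemma rpow_mul_rpow_eq_left {p q : ℝ} (hp : 0 < p) (hq : 0 < q) (lam : ℝ) :
    p ^ (1 - lam) * q ^ lam = p * exp (-(lam * log (p / q))) := by
  rw [rpow_def_of_pos hp, rpow_def_of_pos hq, ← exp_add, log_div hp.ne' hq.ne',
    show log p * (1 - lam) + log q * lam = log p + -(lam * (log p - log q)) by ring, exp_add,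
    exp_log hp]

lemma rpow_mul_rpow_eq_right {p q : ℝ} (hp : 0 < p) (hq : 0 < q) (lam : ℝ) :
    p ^ (1 - lam) * q ^ lam = q * exp ((1 - lam) * log (p / q)) := by
  rw [rpow_def_of_pos hp, rpow_def_of_pos hq, ← exp_add, log_div hp.ne' hq.ne',
    show log p * (1 - lam) + log q * lam = log q + (1 - lam) * (log p - log q) by ring, exp_add,
    exp_log hq]

section Tilting

variable {P1 P2 : X → ℝ} (hs1 : ∀ a, 0 < P1 a) (hs2 : ∀ a, 0 < P2 a)
include hs1 hs2

lemma tilted_eq_left (lam : ℝ) (a : X) :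
    tilted P1 P2 lam a = P1 a * exp (-(lam * logRatio P1 P2 a)) / tiltNorm P1 P2 lam := by
  rw [logRatio, ← rpow_mul_rpow_eq_left (hs1 a) (hs2 a)]
  rfl

lemma tilted_eq_right (lam : ℝ) (a : X) :
    tilted P1 P2 lam a = P2 a * exp ((1 - lam) * logRatio P1 P2 a) / tiltNorm P1 P2 lam := by
  rw [logRatio, ← rpow_mul_rpow_eq_right (hs1 a) (hs2 a)]
  rfl

lemma tiltNorm_eq_sum_left (lam : ℝ) :
    tiltNorm P1 P2 lam = ∑ a, P1 a * exp (-(lam * logRatio P1 P2 a)) :=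
  sum_congr rfl fun a _ => rpow_mul_rpow_eq_left (hs1 a) (hs2 a) lam

lemma tiltNorm_eq_sum_right (lam : ℝ) :
    tiltNorm P1 P2 lam = ∑ a, P2 a * exp ((1 - lam) * logRatio P1 P2 a) :=
  sum_congr rfl fun a _ => rpow_mul_rpow_eq_right (hs1 a) (hs2 a) lam

variable [Nonempty X]

lemma tiltNorm_pos (lam : ℝ) : 0 < tiltNorm P1 P2 lam :=
  sum_pos (fun a _ => mul_pos (rpow_pos_of_pos (hs1 a) _) (rpow_pos_of_pos (hs2 a) _))
    univ_nonempty

lemma tilted_pos (lam : ℝ) (a : X) : 0 < tilted P1 P2 lam a :=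
  div_pos (mul_pos (rpow_pos_of_pos (hs1 a) _) (rpow_pos_of_pos (hs2 a) _))
    (tiltNorm_pos hs1 hs2 lam)

lemma sum_tilted (lam : ℝ) : ∑ a, tilted P1 P2 lam a = 1 := by
  simp only [tilted, ← sum_div]
  exact div_self (tiltNorm_pos hs1 hs2 lam).ne'

lemma klDiv_eq_klDiv_tilted_sub_left {R : X → ℝ} (hR : ∀ a, 0 < R a) (hR1 : ∑ a, R a = 1)
    (lam : ℝ) : klDiv R P1 = klDiv R (tilted P1 P2 lam) - lam * ∑ a, R a * logRatio P1 P2 a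
      - log (tiltNorm P1 P2 lam) := by
  rw [klDiv_eq_klDiv_add_of_eq_mul_exp hR hR1 hs1 (tiltNorm_pos hs1 hs2 lam)
    (tilted_eq_left hs1 hs2 lam)]
  simp only [mul_neg, sum_neg_distrib, mul_sum, mul_left_comm lam]
  ring

lemma klDiv_eq_klDiv_tilted_add_right {R : X → ℝ} (hR : ∀ a, 0 < R a) (hR1 : ∑ a, R a = 1)
    (lam : ℝ) : klDiv R P2 = klDiv R (tilted P1 P2 lam)
      + (1 - lam) * ∑ a, R a * logRatio P1 P2 a - log (tiltNorm P1 P2 lam) := by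
  rw [klDiv_eq_klDiv_add_of_eq_mul_exp hR hR1 hs2 (tiltNorm_pos hs1 hs2 lam)
    (tilted_eq_right hs1 hs2 lam)]
  simp only [mul_sum, mul_left_comm (1 - lam)]

lemma klDiv_tilted_left (lam : ℝ) :
    klDiv (tilted P1 P2 lam) P1 = -(lam * tiltedMean P1 P2 lam) - log (tiltNorm P1 P2 lam) := by
  rw [klDiv_eq_klDiv_tilted_sub_left hs1 hs2 (tilted_pos hs1 hs2 lam) (sum_tilted hs1 hs2 lam),
    klDiv_self, tiltedMean]
  ring

lemma klDiv_tilted_right (lam : ℝ) :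
    klDiv (tilted P1 P2 lam) P2 = (1 - lam) * tiltedMean P1 P2 lam - log (tiltNorm P1 P2 lam) := by
  rw [klDiv_eq_klDiv_tilted_add_right hs1 hs2 (tilted_pos hs1 hs2 lam) (sum_tilted hs1 hs2 lam),
    klDiv_self, tiltedMean]
  ring

lemma tiltedMean_eq_sub (lam : ℝ) :
    tiltedMean P1 P2 lam = klDiv (tilted P1 P2 lam) P2 - klDiv (tilted P1 P2 lam) P1 := by
  rw [klDiv_tilted_left hs1 hs2, klDiv_tilted_right hs1 hs2]
  ring

lemma one_sub_mul_klDiv_tilted_add_mul (lam : ℝ) :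
    (1 - lam) * klDiv (tilted P1 P2 lam) P1 + lam * klDiv (tilted P1 P2 lam) P2
      = -log (tiltNorm P1 P2 lam) := by
  rw [klDiv_tilted_left hs1 hs2, klDiv_tilted_right hs1 hs2]
  ring

lemma neg_log_tiltNorm_le_left (h2 : ∑ a, P2 a = 1) (lam : ℝ) :
    -log (tiltNorm P1 P2 lam) ≤ (1 - lam) * klDiv P2 P1 := by
  have h := klDiv_eq_klDiv_tilted_sub_left hs1 hs2 hs2 h2 lam
  have := klDiv_nonneg hs2 (tilted_pos hs1 hs2 lam) (h2.trans (sum_tilted hs1 hs2 lam).symm)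
  rw [sum_mul_logRatio_right] at h
  linarith

lemma neg_log_tiltNorm_le_right (h1 : ∑ a, P1 a = 1) (lam : ℝ) :
    -log (tiltNorm P1 P2 lam) ≤ lam * klDiv P1 P2 := by
  have h := klDiv_eq_klDiv_tilted_add_right hs1 hs2 hs1 h1 lam
  have := klDiv_nonneg hs1 (tilted_pos hs1 hs2 lam) (h1.trans (sum_tilted hs1 hs2 lam).symm)
  rw [sum_mul_logRatio_left] at h
  linarith

end Tilting

section Divergences

variable {P1 P2 : X → ℝ} (hs1 : ∀ a, 0 < P1 a) (hs2 : ∀ a, 0 < P2 a)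
include hs1 hs2

lemma klDiv_tilted_left_le [Nonempty X] (h2 : ∑ a, P2 a = 1) {lam : ℝ}
    (hlam : lam ∈ Set.Icc (0:ℝ) 1) :
    klDiv (tilted P1 P2 lam) P1 ≤ klDiv P2 P1 := by
  rcases hlam.2.lt_or_eq with hlt | rfl
  · have hsum := one_sub_mul_klDiv_tilted_add_mul hs1 hs2 lam
    have hlog := neg_log_tiltNorm_le_left hs1 hs2 h2 lam
    have h2nn := klDiv_nonneg (tilted_pos hs1 hs2 lam) hs2 ((sum_tilted hs1 hs2 lam).trans h2.symm)
    have : (1 - lam) * klDiv (tilted P1 P2 lam) P1 ≤ (1 - lam) * klDiv P2 P1 := by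
      nlinarith [mul_nonneg hlam.1 h2nn]
    exact le_of_mul_le_mul_left this (by linarith)
  · rw [tilted_one P1 h2]

lemma klDiv_tilted_right_le [Nonempty X] (h1 : ∑ a, P1 a = 1) {lam : ℝ}
    (hlam : lam ∈ Set.Icc (0:ℝ) 1) :
    klDiv (tilted P1 P2 lam) P2 ≤ klDiv P1 P2 := by
  rcases hlam.1.lt_or_eq with hlt | rfl
  · have hsum := one_sub_mul_klDiv_tilted_add_mul hs1 hs2 lam
    have hlog := neg_log_tiltNorm_le_right hs1 hs2 h1 lam
    have h1nn := klDiv_nonneg (tilted_pos hs1 hs2 lam) hs1 ((sum_tilted hs1 hs2 lam).trans h1.symm)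
    have : lam * klDiv (tilted P1 P2 lam) P2 ≤ lam * klDiv P1 P2 := by
      nlinarith [mul_nonneg (sub_nonneg.2 hlam.2) h1nn]
    exact le_of_mul_le_mul_left this hlt
  · rw [tilted_zero h1 P2]

lemma klDiv_tilted_pos_of_eq (h1 : ∑ a, P1 a = 1) (h2 : ∑ a, P2 a = 1) (hne : P1 ≠ P2) {lam : ℝ}
    (hlam : klDiv (tilted P1 P2 lam) P1 = klDiv (tilted P1 P2 lam) P2) :
    0 < klDiv (tilted P1 P2 lam) P1 := by
  have := nonempty_of_sum_eq_one h1
  have hQ := tilted_pos hs1 hs2 lam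
  have hQ1 := sum_tilted hs1 hs2 lam
  refine (klDiv_nonneg hQ hs1 (hQ1.trans h1.symm)).lt_of_ne fun h0 => hne ?_
  exact (eq_of_klDiv_eq_zero hQ hs1 (hQ1.trans h1.symm) h0.symm).symm.trans
    (eq_of_klDiv_eq_zero hQ hs2 (hQ1.trans h2.symm) (hlam ▸ h0.symm))

/-- At the equalizer `λ*` both divergences equal `-log Z(λ*)`, which is at most `(1-λ*)·D(P2‖P1)`
and at most `λ*·D(P1‖P2)`; so `D(P2‖P1)` and `D(P1‖P2)` cannot both be `≤ D*`. -/
lemma two_le_of_klDiv_le_mul [Nonempty X] (h1 : ∑ a, P1 a = 1) (h2 : ∑ a, P2 a = 1) {lam : ℝ}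
    (hlam : lam ∈ Set.Icc (0:ℝ) 1)
    (hstar : klDiv (tilted P1 P2 lam) P1 = klDiv (tilted P1 P2 lam) P2)
    (hpos : 0 < klDiv (tilted P1 P2 lam) P1) {K : ℕ}
    (h21 : klDiv P2 P1 ≤ K * klDiv (tilted P1 P2 lam) P1)
    (h12 : klDiv P1 P2 ≤ K * klDiv (tilted P1 P2 lam) P1) : 2 ≤ K := by
  by_contra! hK
  have hK1 : (K : ℝ) ≤ 1 := by exact_mod_cast Nat.lt_succ_iff.mp hK
  set D := klDiv (tilted P1 P2 lam) P1
  have hZ : -log (tiltNorm P1 P2 lam) = D := by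
    rw [← one_sub_mul_klDiv_tilted_add_mul hs1 hs2, ← hstar]; ring
  have hle1 := neg_log_tiltNorm_le_left hs1 hs2 h2 lam
  have hle2 := neg_log_tiltNorm_le_right hs1 hs2 h1 lam
  have hKD : (K : ℝ) * D ≤ D := by nlinarith
  nlinarith [mul_le_mul_of_nonneg_left (h21.trans hKD) (sub_nonneg.2 hlam.2),
    mul_le_mul_of_nonneg_left (h12.trans hKD) hlam.1]

end Divergences

def seqProb (P : X → ℝ) {N : ℕ} (p : (Fin N → X) → Prop) [DecidablePred p] : ℝ :=
  ∑ x : Fin N → X, prodProb P x * if p x then 1 else 0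

section SeqProb

variable {P : X → ℝ} {N : ℕ}

lemma seqProb_mono (hP : ∀ a, 0 ≤ P a) {p q : (Fin N → X) → Prop} [DecidablePred p]
    [DecidablePred q] (h : ∀ x, p x → q x) : seqProb P p ≤ seqProb P q :=
  sum_le_sum fun x _ => mul_le_mul_of_nonneg_left
    (by split_ifs <;> simp_all) (prod_nonneg fun i _ => hP (x i))

lemma seqProb_le_add (hP : ∀ a, 0 ≤ P a) {p q r : (Fin N → X) → Prop} [DecidablePred p]
    [DecidablePred q] [DecidablePred r] (h : ∀ x, p x → q x ∨ r x) :
    seqProb P p ≤ seqProb P q + seqProb P r := by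
  rw [seqProb, seqProb, seqProb, ← sum_add_distrib]
  refine sum_le_sum fun x _ => ?_
  rw [← mul_add]
  refine mul_le_mul_of_nonneg_left ?_ (prod_nonneg fun i _ => hP (x i))
  by_cases hp : p x
  · rcases h x hp with hq | hr <;> split_ifs <;> norm_num
  · split_ifs <;> norm_num

lemma sum_prodProb_mul_prod_prefix (hP : ∑ a, P a = 1) {m : ℕ} (hm : m ≤ N) (h : X → ℝ) :
    ∑ x : Fin N → X, prodProb P x * ∏ i : Fin N with i.val < m, h (x i) = (∑ a, P a * h a) ^ m :=
  calc _ = ∑ x : Fin N → X, ∏ i, P (x i) * if i.val < m then h (x i) else 1 := by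
        simp only [prodProb, prod_filter, prod_mul_distrib]
    _ = ∏ i : Fin N, ∑ a, P a * if i.val < m then h a else 1 := by rw [Fintype.prod_sum]
    _ = ∏ i : Fin N, if i.val < m then ∑ a, P a * h a else 1 :=
        prod_congr rfl fun i _ => by split_ifs <;> simp [hP]
    _ = _ := by rw [← prod_filter, prod_const, Fin.card_filter_val_lt, min_eq_right hm]

lemma seqProb_prefix_eq_pow (hP : ∑ a, P a = 1) {m : ℕ} (hm : m ≤ N) (a : X) :
    seqProb P (fun x : Fin N → X => ∀ i : Fin N, (i : ℕ) < m → x i = a) = P a ^ m := by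
  have := sum_prodProb_mul_prod_prefix hP hm fun b => if b = a then 1 else 0
  simp only [prod_boole, mem_filter, mem_univ, mul_ite, mul_one, mul_zero,
    sum_ite_eq'] at this
  simpa [seqProb] using this

lemma seqProb_le_exp_mul_mgf_pow (hP : IsPMF P) {m : ℕ} (hm : m ≤ N) (f : X → ℝ) {s c : ℝ}
    (hs : 0 ≤ s) (p : (Fin N → X) → Prop) [DecidablePred p]
    (hp : ∀ x, p x → ∑ i : Fin N with i.val < m, f (x i) ≤ c) :
    seqProb P p ≤ exp (s * c) * (∑ a, P a * exp (-(s * f a))) ^ m := by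
  have hind : ∀ x : Fin N → X,
      (if p x then 1 else 0) ≤ exp (s * c) * ∏ i : Fin N with i.val < m, exp (-(s * f (x i))) := by
    intro x
    rw [← exp_sum, ← exp_add, sum_neg_distrib, ← mul_sum]
    split_ifs with hx
    · exact one_le_exp (by nlinarith [hp x hx])
    · positivity
  calc seqProb P p
      ≤ ∑ x : Fin N → X,
          prodProb P x * (exp (s * c) * ∏ i : Fin N with i.val < m, exp (-(s * f (x i)))) :=
        sum_le_sum fun x _ => mul_le_mul_of_nonneg_left (hind x) (prod_nonneg fun i _ => hP.1 (x i))
    _ = exp (s * c) *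
          ∑ x : Fin N → X, prodProb P x * ∏ i : Fin N with i.val < m, exp (-(s * f (x i))) := by
        rw [mul_sum]; simp only [mul_left_comm]
    _ = _ := by rw [sum_prodProb_mul_prod_prefix hP.2 hm fun a => exp (-(s * f a))]

end SeqProb

omit [Fintype X] in
lemma llr_histX (P1 P2 : X → ℝ) {N : ℕ} (x : Fin N → X) (m : ℕ) :
    llr P1 P2 (histX x m) = ∑ i : Fin N with i.val < m, logRatio P1 P2 (x i) := by
  rw [llr, histX, List.map_take, List.map_ofFn, List.sum_take_ofFn]
  rfl

omit [Fintype X] in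
lemma llr_histX_of_prefix (P1 P2 : X → ℝ) {N m : ℕ} (hm : m ≤ N) {x : Fin N → X} {a : X}
    (hx : ∀ i : Fin N, (i : ℕ) < m → x i = a) :
    llr P1 P2 (histX x m) = m * logRatio P1 P2 a := by
  rw [llr_histX, sum_congr rfl fun i hi => by rw [hx i (mem_filter.mp hi).2], sum_const,
    Fin.card_filter_val_lt, min_eq_right hm, nsmul_eq_mul]

section Chernoff

variable {P1 P2 : X → ℝ} (hs1 : ∀ a, 0 < P1 a) (hs2 : ∀ a, 0 < P2 a) [Nonempty X]
  {N m : ℕ} (hm : m ≤ N) {lam : ℝ} (hlam : lam ∈ Set.Icc (0:ℝ) 1)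
  (p : (Fin N → X) → Prop) [DecidablePred p]
include hs1 hs2 hm hlam

lemma seqProb_llr_le_tiltedMean (h1 : ∑ a, P1 a = 1)
    (hp : ∀ x, p x → llr P1 P2 (histX x m) ≤ tiltedMean P1 P2 lam * m) :
    seqProb P1 p ≤ exp (-(m * klDiv (tilted P1 P2 lam) P1)) := by
  refine (seqProb_le_exp_mul_mgf_pow ⟨fun a => (hs1 a).le, h1⟩ hm (logRatio P1 P2) hlam.1 p
    fun x hx => llr_histX P1 P2 x m ▸ hp x hx).trans_eq ?_
  rw [← tiltNorm_eq_sum_left hs1 hs2, ← exp_log (tiltNorm_pos hs1 hs2 lam), ← exp_nat_mul,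
    ← exp_add, klDiv_tilted_left hs1 hs2]
  ring_nf

lemma seqProb_tiltedMean_le_llr (h2 : ∑ a, P2 a = 1)
    (hp : ∀ x, p x → tiltedMean P1 P2 lam * m ≤ llr P1 P2 (histX x m)) :
    seqProb P2 p ≤ exp (-(m * klDiv (tilted P1 P2 lam) P2)) := by
  refine (seqProb_le_exp_mul_mgf_pow ⟨fun a => (hs2 a).le, h2⟩ hm (fun a => -logRatio P1 P2 a)
    (c := -(tiltedMean P1 P2 lam * m))
    (sub_nonneg.2 hlam.2) p fun x hx => ?_).trans_eq ?_
  · rw [sum_neg_distrib, ← llr_histX]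
    exact neg_le_neg (hp x hx)
  simp only [mul_neg, neg_neg]
  rw [← tiltNorm_eq_sum_right hs1 hs2, ← exp_log (tiltNorm_pos hs1 hs2 lam), ← exp_nat_mul,
    ← exp_add, klDiv_tilted_right hs1 hs2]
  ring_nf

end Chernoff

def SeqTest.decision {N : ℕ} (T : SeqTest X N) (x : Fin N → X) : Bool :=
  T.accept1 (histX x (T.τ x))

section SeqTest

variable {N : ℕ} (T : SeqTest X N)

lemma errProb1_eq_seqProb (P1 : X → ℝ) :
    errProb1 P1 T = seqProb P1 (fun x => T.decision x = false) := rfl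

lemma errProb2_eq_seqProb (P2 : X → ℝ) :
    errProb2 P2 T = seqProb P2 (fun x => T.decision x = true) := rfl

lemma lateProbHT_eq_seqProb (P : X → ℝ) (n : ℕ) :
    lateProbHT P T n = seqProb P (fun x => n < T.τ x) := rfl

end SeqTest

omit [Fintype X] in
lemma histX_length {N m : ℕ} (hm : m ≤ N) (x : Fin N → X) : (histX x m).length = m := by
  simp [histX, hm]

section TwoPhase

variable {P1 P2 : X → ℝ} {α1 β1 α : ℝ} {K n : ℕ} (hK : 1 ≤ K) (x : Fin (K * n) → X)
include hK

lemma twoPhaseTest_decision_of_stop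
    (hstop : α1 * n ≤ llr P1 P2 (histX x n) ∨ llr P1 P2 (histX x n) ≤ β1 * n) :
    (twoPhaseTest P1 P2 α1 β1 α K n hK).decision x = decide (α1 * n ≤ llr P1 P2 (histX x n)) := by
  simp only [SeqTest.decision, twoPhaseTest, if_pos hstop,
    histX_length (Nat.le_mul_of_pos_left n hK), le_refl, if_true]

lemma twoPhaseTest_decision_of_not_stop (hKn : n < K * n)
    (hstop : ¬(α1 * n ≤ llr P1 P2 (histX x n) ∨ llr P1 P2 (histX x n) ≤ β1 * n)) :
    (twoPhaseTest P1 P2 α1 β1 α K n hK).decision x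
      = decide (α * (K * n : ℕ) ≤ llr P1 P2 (histX x (K * n))) := by
  simp only [SeqTest.decision, twoPhaseTest, if_neg hstop, histX_length le_rfl, not_le.2 hKn,
    if_false]

lemma twoPhaseTest_llr_of_decision_eq_false (hKn : n < K * n)
    (h : (twoPhaseTest P1 P2 α1 β1 α K n hK).decision x = false) :
    llr P1 P2 (histX x n) ≤ β1 * n ∨ llr P1 P2 (histX x (K * n)) < α * (K * n : ℕ) := by
  by_cases hstop : α1 * n ≤ llr P1 P2 (histX x n) ∨ llr P1 P2 (histX x n) ≤ β1 * n
  · rw [twoPhaseTest_decision_of_stop hK x hstop, decide_eq_false_iff_not] at h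
    exact Or.inl (hstop.resolve_left h)
  · rw [twoPhaseTest_decision_of_not_stop hK x hKn hstop, decide_eq_false_iff_not, not_le] at h
    exact Or.inr h

lemma twoPhaseTest_llr_of_decision_eq_true (hKn : n < K * n)
    (h : (twoPhaseTest P1 P2 α1 β1 α K n hK).decision x = true) :
    α1 * n ≤ llr P1 P2 (histX x n) ∨ α * (K * n : ℕ) ≤ llr P1 P2 (histX x (K * n)) := by
  by_cases hstop : α1 * n ≤ llr P1 P2 (histX x n) ∨ llr P1 P2 (histX x n) ≤ β1 * n
  · rw [twoPhaseTest_decision_of_stop hK x hstop, decide_eq_true_iff] at h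
    exact Or.inl h
  · rw [twoPhaseTest_decision_of_not_stop hK x hKn hstop, decide_eq_true_iff] at h
    exact Or.inr h

lemma twoPhaseTest_llr_of_lt_τ (h : n < (twoPhaseTest P1 P2 α1 β1 α K n hK).τ x) :
    β1 * n < llr P1 P2 (histX x n) ∧ llr P1 P2 (histX x n) < α1 * n := by
  have hstop : ¬(α1 * n ≤ llr P1 P2 (histX x n) ∨ llr P1 P2 (histX x n) ≤ β1 * n) :=
    fun hstop => by simp [twoPhaseTest, if_pos hstop] at h
  simp only [not_or, not_le] at hstop
  exact ⟨hstop.2, hstop.1⟩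

lemma twoPhaseTest_decision_eq_false_of_llr (hβ1 : llr P1 P2 (histX x n) ≤ β1 * n)
    (hα1 : llr P1 P2 (histX x n) < α1 * n) :
    (twoPhaseTest P1 P2 α1 β1 α K n hK).decision x = false := by
  rw [twoPhaseTest_decision_of_stop hK x (Or.inr hβ1)]
  simpa using hα1

lemma twoPhaseTest_decision_eq_true_of_llr (hα1 : α1 * n ≤ llr P1 P2 (histX x n)) :
    (twoPhaseTest P1 P2 α1 β1 α K n hK).decision x = true := by
  rw [twoPhaseTest_decision_of_stop hK x (Or.inl hα1)]
  simpa using hα1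

end TwoPhase

section TwoPhaseBounds

variable {P1 P2 : X → ℝ} {α1 β1 α : ℝ} {K n : ℕ} (hK : 1 ≤ K)

lemma pow_le_errProb1_twoPhaseTest (h1 : IsPMF P1) (hn : 1 ≤ n) {a : X}
    (hα1 : logRatio P1 P2 a < α1) (hβ1 : logRatio P1 P2 a ≤ β1) :
    P1 a ^ n ≤ errProb1 P1 (twoPhaseTest P1 P2 α1 β1 α K n hK) := by
  have hnK := Nat.le_mul_of_pos_left n hK
  have hn0 : (0 : ℝ) < n := by exact_mod_cast hn
  rw [← seqProb_prefix_eq_pow h1.2 hnK a, errProb1_eq_seqProb]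
  refine seqProb_mono h1.1 fun x hx => ?_
  have hllr := llr_histX_of_prefix P1 P2 hnK hx
  exact twoPhaseTest_decision_eq_false_of_llr hK x (by rw [hllr, mul_comm]; gcongr)
    (by rw [hllr, mul_comm]; gcongr)

lemma pow_le_errProb2_twoPhaseTest (h2 : IsPMF P2) {a : X} (hα1 : α1 ≤ logRatio P1 P2 a) :
    P2 a ^ n ≤ errProb2 P2 (twoPhaseTest P1 P2 α1 β1 α K n hK) := by
  have hnK := Nat.le_mul_of_pos_left n hK
  rw [← seqProb_prefix_eq_pow h2.2 hnK a, errProb2_eq_seqProb]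
  refine seqProb_mono h2.1 fun x hx => twoPhaseTest_decision_eq_true_of_llr hK x ?_
  rw [llr_histX_of_prefix P1 P2 hnK hx, mul_comm]
  gcongr

variable (hs1 : ∀ a, 0 < P1 a) (hs2 : ∀ a, 0 < P2 a) [Nonempty X] {lam : ℝ}
  (hlam : lam ∈ Set.Icc (0:ℝ) 1)
include hs1 hs2 hlam

lemma errProb1_twoPhaseTest_le (h1 : ∑ a, P1 a = 1) (hK2 : 2 ≤ K) (hn : 1 ≤ n) {lam1 : ℝ}
    (hlam1 : lam1 ∈ Set.Icc (0:ℝ) 1) (hβ1 : β1 = tiltedMean P1 P2 lam1)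
    (hα : α = tiltedMean P1 P2 lam)
    (hE : klDiv (tilted P1 P2 lam1) P1 ≤ K * klDiv (tilted P1 P2 lam) P1) :
    errProb1 P1 (twoPhaseTest P1 P2 α1 β1 α K n hK)
      ≤ 2 * exp (-(n * klDiv (tilted P1 P2 lam1) P1)) := by
  subst hβ1 hα
  have hKn : n < K * n := by nlinarith
  have hexp : exp (-((K * n : ℕ) * klDiv (tilted P1 P2 lam) P1))
      ≤ exp (-(n * klDiv (tilted P1 P2 lam1) P1)) := by
    have := mul_le_mul_of_nonneg_left hE (Nat.cast_nonneg n)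
    exact exp_le_exp.2 (by push_cast; linarith)
  rw [errProb1_eq_seqProb]
  calc _ ≤ seqProb P1 (fun x => llr P1 P2 (histX x n) ≤ tiltedMean P1 P2 lam1 * n)
        + seqProb P1 (fun x => llr P1 P2 (histX x (K * n)) ≤ tiltedMean P1 P2 lam * (K * n : ℕ)) :=
        seqProb_le_add (fun a => (hs1 a).le) fun x hx =>
          (twoPhaseTest_llr_of_decision_eq_false hK x hKn hx).imp_right le_of_lt
    _ ≤ exp (-(n * klDiv (tilted P1 P2 lam1) P1))
        + exp (-((K * n : ℕ) * klDiv (tilted P1 P2 lam) P1)) :=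
        add_le_add
          (seqProb_llr_le_tiltedMean hs1 hs2 (Nat.le_mul_of_pos_left n hK) hlam1 _ h1 fun _ h => h)
          (seqProb_llr_le_tiltedMean hs1 hs2 le_rfl hlam _ h1 fun _ h => h)
    _ ≤ _ := by linarith

lemma errProb2_twoPhaseTest_le (h2 : ∑ a, P2 a = 1) (hK2 : 2 ≤ K) (hn : 1 ≤ n) {lam2 : ℝ}
    (hlam2 : lam2 ∈ Set.Icc (0:ℝ) 1) (hα1 : α1 = tiltedMean P1 P2 lam2)
    (hα : α = tiltedMean P1 P2 lam)
    (hE : klDiv (tilted P1 P2 lam2) P2 ≤ K * klDiv (tilted P1 P2 lam) P2) :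
    errProb2 P2 (twoPhaseTest P1 P2 α1 β1 α K n hK)
      ≤ 2 * exp (-(n * klDiv (tilted P1 P2 lam2) P2)) := by
  subst hα1 hα
  have hKn : n < K * n := by nlinarith
  have hexp : exp (-((K * n : ℕ) * klDiv (tilted P1 P2 lam) P2))
      ≤ exp (-(n * klDiv (tilted P1 P2 lam2) P2)) := by
    have := mul_le_mul_of_nonneg_left hE (Nat.cast_nonneg n)
    exact exp_le_exp.2 (by push_cast; linarith)
  rw [errProb2_eq_seqProb]
  calc _ ≤ seqProb P2 (fun x => tiltedMean P1 P2 lam2 * n ≤ llr P1 P2 (histX x n))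
        + seqProb P2 (fun x => tiltedMean P1 P2 lam * (K * n : ℕ) ≤ llr P1 P2 (histX x (K * n))) :=
        seqProb_le_add (fun a => (hs2 a).le) fun x hx =>
          twoPhaseTest_llr_of_decision_eq_true hK x hKn hx
    _ ≤ exp (-(n * klDiv (tilted P1 P2 lam2) P2))
        + exp (-((K * n : ℕ) * klDiv (tilted P1 P2 lam) P2)) :=
        add_le_add
          (seqProb_tiltedMean_le_llr hs1 hs2 (Nat.le_mul_of_pos_left n hK) hlam2 _ h2 fun _ h => h)
          (seqProb_tiltedMean_le_llr hs1 hs2 le_rfl hlam _ h2 fun _ h => h)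
    _ ≤ _ := by linarith

lemma lateProbHT_twoPhaseTest_le_left (h1 : ∑ a, P1 a = 1) (hα1 : α1 = tiltedMean P1 P2 lam)
    {γ : ℝ} (hγ : γ ≤ klDiv (tilted P1 P2 lam) P1) :
    lateProbHT P1 (twoPhaseTest P1 P2 α1 β1 α K n hK) n ≤ exp (-(γ * n)) := by
  subst hα1
  rw [lateProbHT_eq_seqProb]
  refine (seqProb_llr_le_tiltedMean hs1 hs2 (Nat.le_mul_of_pos_left n hK) hlam _ h1
    fun x hx => (twoPhaseTest_llr_of_lt_τ hK x hx).2.le).trans (exp_le_exp.2 ?_)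
  nlinarith [(Nat.cast_nonneg n : (0:ℝ) ≤ n)]

lemma lateProbHT_twoPhaseTest_le_right (h2 : ∑ a, P2 a = 1) (hβ1 : β1 = tiltedMean P1 P2 lam)
    {γ : ℝ} (hγ : γ ≤ klDiv (tilted P1 P2 lam) P2) :
    lateProbHT P2 (twoPhaseTest P1 P2 α1 β1 α K n hK) n ≤ exp (-(γ * n)) := by
  subst hβ1
  rw [lateProbHT_eq_seqProb]
  refine (seqProb_tiltedMean_le_llr hs1 hs2 (Nat.le_mul_of_pos_left n hK) hlam _ h2
    fun x hx => (twoPhaseTest_llr_of_lt_τ hK x hx).1.le).trans (exp_le_exp.2 ?_)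
  nlinarith [(Nat.cast_nonneg n : (0:ℝ) ≤ n)]

end TwoPhaseBounds

lemma lt_sum_mul_of_forall_le {w f : X → ℝ} (hw : ∀ a, 0 < w a) (hw1 : ∑ a, w a = 1) {a b : X}
    (hmin : ∀ c, f a ≤ f c) (hab : f a ≠ f b) : f a < ∑ c, w c * f c := by
  have : 0 < ∑ c, w c * (f c - f a) :=
    sum_pos' (fun c _ => mul_nonneg (hw c).le (sub_nonneg.2 (hmin c)))
      ⟨b, mem_univ b, mul_pos (hw b) (sub_pos.2 ((hmin b).lt_of_ne hab))⟩
  simp only [mul_sub, sum_sub_distrib, ← sum_mul, hw1, one_mul] at this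
  linarith

section LogRatio

variable {P1 P2 : X → ℝ} (h1 : ∑ a, P1 a = 1) (h2 : ∑ a, P2 a = 1)
  (hs1 : ∀ a, 0 < P1 a) (hs2 : ∀ a, 0 < P2 a) (hne : P1 ≠ P2)
include h1 h2 hs1 hs2 hne

lemma exists_logRatio_ne (a : X) : ∃ b, logRatio P1 P2 a ≠ logRatio P1 P2 b := by
  by_contra! hconst
  have hP1 : ∀ b, P1 b = exp (logRatio P1 P2 a) * P2 b := fun b => by
    rw [hconst b, logRatio, exp_log (div_pos (hs1 b) (hs2 b)), div_mul_cancel₀ _ (hs2 b).ne']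
  have hexp : exp (logRatio P1 P2 a) = 1 := by
    rw [← h1, sum_congr rfl fun b _ => hP1 b, ← mul_sum, h2, mul_one]
  exact hne (funext fun b => by rw [hP1 b, hexp, one_mul])

lemma exists_forall_logRatio_lt_tiltedMean :
    ∃ a, ∀ lam, logRatio P1 P2 a < tiltedMean P1 P2 lam := by
  have := nonempty_of_sum_eq_one h1
  obtain ⟨a, -, hmin⟩ := exists_min_image univ (logRatio P1 P2) univ_nonempty
  obtain ⟨b, hab⟩ := exists_logRatio_ne h1 h2 hs1 hs2 hne a
  exact ⟨a, fun lam => lt_sum_mul_of_forall_le (tilted_pos hs1 hs2 lam) (sum_tilted hs1 hs2 lam)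
    (fun c => hmin c (mem_univ c)) hab⟩

lemma exists_forall_tiltedMean_lt_logRatio :
    ∃ a, ∀ lam, tiltedMean P1 P2 lam < logRatio P1 P2 a := by
  have := nonempty_of_sum_eq_one h1
  obtain ⟨a, -, hmax⟩ := exists_max_image univ (logRatio P1 P2) univ_nonempty
  obtain ⟨b, hab⟩ := exists_logRatio_ne h1 h2 hs1 hs2 hne a
  refine ⟨a, fun lam => ?_⟩
  have := lt_sum_mul_of_forall_le (f := fun c => -logRatio P1 P2 c) (tilted_pos hs1 hs2 lam)
    (sum_tilted hs1 hs2 lam) (fun c => neg_le_neg (hmax c (mem_univ c))) (neg_injective.ne hab)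
  simp only [mul_neg, sum_neg_distrib, neg_lt_neg_iff] at this
  exact this

end LogRatio

def fixedLengthTest (P1 P2 : X → ℝ) (θ : ℝ) {N : ℕ} (n : ℕ) (hn : n ≤ N) : SeqTest X N where
  τ _ := n
  τ_le _ := hn
  τ_stopping _ _ _ := rfl
  accept1 l := decide (θ * n ≤ llr P1 P2 l)

lemma RFL_subset_RAFL {P1 P2 : X → ℝ} (h1 : ∑ a, P1 a = 1) (h2 : ∑ a, P2 a = 1)
    (hs1 : ∀ a, 0 < P1 a) (hs2 : ∀ a, 0 < P2 a) (γ : ℝ) {K : ℕ} (hK : 1 ≤ K) :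
    RFL P1 P2 ⊆ RAFL P1 P2 γ K := by
  have := nonempty_of_sum_eq_one h1
  rintro E ⟨lam, hlam, hE1, hE2⟩ δ hδ
  refine ⟨0, fun n _ => ?_⟩
  have hnK := Nat.le_mul_of_pos_left n hK
  have hn0 : (0 : ℝ) ≤ n := Nat.cast_nonneg n
  refine ⟨fixedLengthTest P1 P2 (tiltedMean P1 P2 lam) n hnK, ?_, ?_, ?_, ?_⟩
  · simp [lateProbHT, fixedLengthTest, exp_nonneg]
  · simp [lateProbHT, fixedLengthTest, exp_nonneg]
  · rw [errProb1_eq_seqProb]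
    refine (seqProb_llr_le_tiltedMean hs1 hs2 hnK hlam _ h1 fun x hx => ?_).trans
      (exp_le_exp.2 (by nlinarith))
    simp only [SeqTest.decision, fixedLengthTest, decide_eq_false_iff_not, not_le] at hx
    exact hx.le
  · rw [errProb2_eq_seqProb]
    refine (seqProb_tiltedMean_le_llr hs1 hs2 hnK hlam _ h2 fun x hx => ?_).trans
      (exp_le_exp.2 (by nlinarith))
    simpa [SeqTest.decision, fixedLengthTest] using hx

lemma mem_RAFL_of_forall_exists_test {P1 P2 : X → ℝ} {γ : ℝ} {K : ℕ} {E1 E2 : ℝ}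
    (htest : ∀ n : ℕ, 1 ≤ n → ∃ T : SeqTest X (K * n),
      lateProbHT P1 T n ≤ exp (-(γ * n)) ∧ lateProbHT P2 T n ≤ exp (-(γ * n)) ∧
      errProb1 P1 T ≤ 2 * exp (-(n * E1)) ∧ errProb2 P2 T ≤ 2 * exp (-(n * E2)))
    {E : ℝ × ℝ} (hE1 : E.1 ≤ E1) (hE2 : E.2 ≤ E2) : E ∈ RAFL P1 P2 γ K := by
  intro δ hδ
  refine ⟨max 1 ⌈log 2 / δ⌉₊, fun n hn => ?_⟩
  have hn0 : (0 : ℝ) ≤ n := Nat.cast_nonneg n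
  have hlog2 : log 2 ≤ δ * n := by
    have : log 2 / δ ≤ n := (Nat.le_ceil _).trans (by exact_mod_cast le_of_max_le_right hn)
    rwa [div_le_iff₀ hδ, mul_comm] at this
  have hslack : ∀ {E' E'' : ℝ}, E' ≤ E'' → 2 * exp (-(n * E'')) ≤ exp (-((E' - δ) * n)) :=
    fun hE => by
      rw [← exp_log two_pos, ← exp_add]
      exact exp_le_exp.2 (by nlinarith)
  obtain ⟨T, hl1, hl2, he1, he2⟩ := htest n (le_of_max_le_left hn)
  exact ⟨T, hl1, hl2, he1.trans (hslack hE1), he2.trans (hslack hE2)⟩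

open Filter Topology in
lemma le_liminf_neg_log_div {e : ℕ → ℝ} {E B : ℝ} (hB : 0 < B) (hlow : ∀ n : ℕ, 1 ≤ n → B ^ n ≤ e n)
    (hup : ∀ n : ℕ, 1 ≤ n → e n ≤ 2 * exp (-(n * E))) :
    E ≤ liminf (fun n : ℕ => -(1 / (n : ℝ)) * log (e n)) atTop := by
  have hbounds : ∀ n : ℕ, 1 ≤ n → E - log 2 / n ≤ -(1 / (n : ℝ)) * log (e n) ∧
      -(1 / (n : ℝ)) * log (e n) ≤ -log B := by
    intro n hn
    have hn0 : (0 : ℝ) < n := by exact_mod_cast hn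
    have he : 0 < e n := (pow_pos hB n).trans_le (hlow n hn)
    have hup' := log_le_log he (hup n hn)
    rw [log_mul two_ne_zero (exp_ne_zero _), log_exp] at hup'
    have hlow' : n * log B ≤ log (e n) := by
      simpa [log_pow] using log_le_log (pow_pos hB n) (hlow n hn)
    rw [show -(1 / (n : ℝ)) * log (e n) = -log (e n) / n by ring, le_div_iff₀ hn0,
      div_le_iff₀ hn0, sub_mul, div_mul_cancel₀ _ hn0.ne']
    constructor <;> linarith
  have hlim : Tendsto (fun n : ℕ => E - log 2 / n) atTop (𝓝 E) := by
    simpa using tendsto_const_nhds.sub (tendsto_const_div_atTop_nhds_zero_nat (log 2))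
  calc E = liminf (fun n : ℕ => E - log 2 / n) atTop := hlim.liminf_eq.symm
    _ ≤ _ := liminf_le_liminf (eventually_atTop.2 ⟨1, fun n hn => (hbounds n hn).1⟩)
        hlim.isBoundedUnder_ge (isBoundedUnder_of_eventually_le
          (eventually_atTop.2 ⟨1, fun n hn => (hbounds n hn).2⟩)).isCoboundedUnder_ge

open Filter in
theorem two_phase_test_alpha_zero_general
    {X : Type} [Fintype X]
    (P1 P2 : X → ℝ) (h1 : IsPMF P1) (h2 : IsPMF P2) (hne : P1 ≠ P2)
    (hs1 : ∀ x, 0 < P1 x) (hs2 : ∀ x, 0 < P2 x)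
    (lamstar : ℝ) (hlamstar : lamstar ∈ Set.Icc (0:ℝ) 1)
    (hstar : klDiv (tilted P1 P2 lamstar) P1 = klDiv (tilted P1 P2 lamstar) P2)
    (γ : ℝ)
    (K : ℕ) (hK : 1 ≤ K)
    (hKstar : max (klDiv P2 P1 / klDiv (tilted P1 P2 lamstar) P1)
        (klDiv P1 P2 / klDiv (tilted P1 P2 lamstar) P1) ≤ (K : ℝ))
    (lam1 : ℝ) (hlam1 : lam1 ∈ Set.Icc (0:ℝ) 1)
    (hlam1feas : γ ≤ klDiv (tilted P1 P2 lam1) P2)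
    (hlam1max : klDiv (tilted P1 P2 lam1) P1 = E1exp P1 P2 γ)
    (lam2 : ℝ) (hlam2 : lam2 ∈ Set.Icc (0:ℝ) 1)
    (hlam2feas : γ ≤ klDiv (tilted P1 P2 lam2) P1)
    (hlam2max : klDiv (tilted P1 P2 lam2) P2 = E2exp P1 P2 γ)
    (α1 β1 : ℝ)
    (hα1 : α1 = klDiv (tilted P1 P2 lam2) P2 - klDiv (tilted P1 P2 lam2) P1)
    (hβ1 : β1 = klDiv (tilted P1 P2 lam1) P2 - klDiv (tilted P1 P2 lam1) P1) :
    (E1exp P1 P2 γ ≤ liminf (fun n : ℕ =>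
        -(1 / (n : ℝ)) * Real.log
          (errProb1 P1 (twoPhaseTest P1 P2 α1 β1 0 K n hK))) atTop) ∧
    (E2exp P1 P2 γ ≤ liminf (fun n : ℕ =>
        -(1 / (n : ℝ)) * Real.log
          (errProb2 P2 (twoPhaseTest P1 P2 α1 β1 0 K n hK))) atTop) ∧
    Rgamma P1 P2 γ ⊆ RAFL P1 P2 γ K := by
  have := nonempty_of_sum_eq_one h1.2
  have hD := klDiv_tilted_pos_of_eq hs1 hs2 h1.2 h2.2 hne hstar
  have h21 := (div_le_iff₀ hD).1 ((le_max_left _ _).trans hKstar)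
  have h12 := (div_le_iff₀ hD).1 ((le_max_right _ _).trans hKstar)
  have hK2 := two_le_of_klDiv_le_mul hs1 hs2 h1.2 h2.2 hlamstar hstar hD h21 h12
  have hα1' := hα1.trans (tiltedMean_eq_sub hs1 hs2 lam2).symm
  have hβ1' := hβ1.trans (tiltedMean_eq_sub hs1 hs2 lam1).symm
  have hα0 : (0 : ℝ) = tiltedMean P1 P2 lamstar := by
    rw [tiltedMean_eq_sub hs1 hs2, hstar, sub_self]
  have herr1 : ∀ n : ℕ, 1 ≤ n → errProb1 P1 (twoPhaseTest P1 P2 α1 β1 0 K n hK)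
      ≤ 2 * exp (-(n * E1exp P1 P2 γ)) := fun n hn => hlam1max ▸
    errProb1_twoPhaseTest_le hK hs1 hs2 hlamstar h1.2 hK2 hn hlam1 hβ1' hα0
      ((klDiv_tilted_left_le hs1 hs2 h2.2 hlam1).trans h21)
  have herr2 : ∀ n : ℕ, 1 ≤ n → errProb2 P2 (twoPhaseTest P1 P2 α1 β1 0 K n hK)
      ≤ 2 * exp (-(n * E2exp P1 P2 γ)) := fun n hn => hlam2max ▸
    errProb2_twoPhaseTest_le hK hs1 hs2 hlamstar h2.2 hK2 hn hlam2 hα1' hα0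
      (hstar ▸ (klDiv_tilted_right_le hs1 hs2 h1.2 hlam2).trans h12)
  obtain ⟨a1, ha1⟩ := exists_forall_logRatio_lt_tiltedMean h1.2 h2.2 hs1 hs2 hne
  obtain ⟨a2, ha2⟩ := exists_forall_tiltedMean_lt_logRatio h1.2 h2.2 hs1 hs2 hne
  refine ⟨le_liminf_neg_log_div (hs1 a1) (fun n hn => pow_le_errProb1_twoPhaseTest hK h1 hn
      (hα1' ▸ ha1 lam2) (hβ1' ▸ (ha1 lam1).le)) herr1,
    le_liminf_neg_log_div (hs2 a2) (fun n _ => pow_le_errProb2_twoPhaseTest hK h2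
      (hα1' ▸ (ha2 lam2).le)) herr2,
    Set.union_subset (RFL_subset_RAFL h1.2 h2.2 hs1 hs2 γ hK) fun E hE => ?_⟩
  exact mem_RAFL_of_forall_exists_test (fun n hn => ⟨_,
    lateProbHT_twoPhaseTest_le_left hK hs1 hs2 hlam2 h1.2 hα1' hlam2feas,
    lateProbHT_twoPhaseTest_le_right hK hs1 hs2 hlam1 h2.2 hβ1' hlam1feas,
    herr1 n hn, herr2 n hn⟩) hE.1.2 hE.2.2

open Filter in
/-- Let `K* = max{ D(P2‖P1)/D*, D(P1‖P2)/D* }`. For every `γ ≤ D*`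
and every `K ≥ K*`, the two-phase test run with Phase-II threshold `α = 0` (i.e.
`λ = λ*`) achieves every error-exponent pair on the boundary of `R_γ` (its type-I and
type-II error exponents are at least `E1(γ)` and `E2(γ)` respectively); in particular
`R_γ ⊆ R_AFL^(γ,K)` for all `K ≥ K*`. -/
theorem two_phase_test_alpha_zero
    {X : Type} [Fintype X]
    (P1 P2 : X → ℝ) (h1 : IsPMF P1) (h2 : IsPMF P2) (hne : P1 ≠ P2)
    (hs1 : ∀ x, 0 < P1 x) (hs2 : ∀ x, 0 < P2 x)
    (lamstar : ℝ) (hlamstar : lamstar ∈ Set.Icc (0:ℝ) 1)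
    (hstar : klDiv (tilted P1 P2 lamstar) P1 = klDiv (tilted P1 P2 lamstar) P2)
    (γ : ℝ) (hγ0 : 0 ≤ γ) (hγ : γ ≤ klDiv (tilted P1 P2 lamstar) P1)
    (K : ℕ) (hK : 1 ≤ K)
    (hKstar : max (klDiv P2 P1 / klDiv (tilted P1 P2 lamstar) P1)
        (klDiv P1 P2 / klDiv (tilted P1 P2 lamstar) P1) ≤ (K : ℝ))
    (lam1 : ℝ) (hlam1 : lam1 ∈ Set.Icc (0:ℝ) 1)
    (hlam1feas : γ ≤ klDiv (tilted P1 P2 lam1) P2)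
    (hlam1max : klDiv (tilted P1 P2 lam1) P1 = E1exp P1 P2 γ)
    (lam2 : ℝ) (hlam2 : lam2 ∈ Set.Icc (0:ℝ) 1)
    (hlam2feas : γ ≤ klDiv (tilted P1 P2 lam2) P1)
    (hlam2max : klDiv (tilted P1 P2 lam2) P2 = E2exp P1 P2 γ)
    (α1 β1 : ℝ)
    (hα1 : α1 = klDiv (tilted P1 P2 lam2) P2 - klDiv (tilted P1 P2 lam2) P1)
    (hβ1 : β1 = klDiv (tilted P1 P2 lam1) P2 - klDiv (tilted P1 P2 lam1) P1) :
    (E1exp P1 P2 γ ≤ liminf (fun n : ℕ =>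
        -(1 / (n : ℝ)) * Real.log
          (errProb1 P1 (twoPhaseTest P1 P2 α1 β1 0 K n hK))) atTop) ∧
    (E2exp P1 P2 γ ≤ liminf (fun n : ℕ =>
        -(1 / (n : ℝ)) * Real.log
          (errProb2 P2 (twoPhaseTest P1 P2 α1 β1 0 K n hK))) atTop) ∧
    Rgamma P1 P2 γ ⊆ RAFL P1 P2 γ K :=
  two_phase_test_alpha_zero_general P1 P2 h1 h2 hne hs1 hs2 lamstar hlamstar hstar γ K hK hKstar
    lam1 hlam1 hlam1feas hlam1max lam2 hlam2 hlam2feas hlam2max α1 β1 hα1 hβ1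

end
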